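/- Given a formal power series β(g) = b₂g² + b₃g³ + ∑_{r≥4} b_r g^r with b₂ ≠ 0, there exists a formal power series reparametrization h(ḡ) = ḡ + O(ḡ²) such that the transformed β-function β̄ = (β∘h)/h' equals exactly b₂ḡ² + b₃ḡ³ (all coefficients of order ≥ 4 vanish); the coefficients of h can be determined recursively order by order. -/

import Mathlib

open PowerSeries

/-- Composition `β ∘ h` of formal power series (meaningful when `h` has zero
constant term): the `n`-th coefficient is `∑_{k ≤ n} βₖ · coeff n (h^k)`. -/
noncomputable def psComp (β h : PowerSeries ℝ) : PowerSeries ℝ :=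
  PowerSeries.mk fun n =>
    ∑ k ∈ Finset.range (n + 1), PowerSeries.coeff k β * PowerSeries.coeff n (h ^ k)

/-!
Write `h = X + ∑_{j ≥ 2} c_j X^j` and put `v = b₂ X² + b₃ X³`. The coefficient of `X^N` in the
defect `β ∘ h - v · h'` depends only on `c_1, …, c_{N-1}`, and affinely on `c_{N-1}`: this
coefficient enters through `b₂ h²` with weight `2 b₂` and through `b₂ X² h'` with weight
`(N - 1) b₂`, so the slope is `-(N - 3) b₂`. For `N ≥ 4` it is nonzero and `c_{N-1}` is solved for
recursively; at `N = 3` it vanishes, but there the equation already holds because `β` and `v`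
agree to third order.
-/

theorem dvd_pow_sub_pow_of_dvd_sub {R : Type*} [CommRing R] {a b f g : R} (hf : a ∣ f)
    (hg : a ∣ g) (hfg : b ∣ g - f) (k : ℕ) : b * a ^ (k - 1) ∣ g ^ k - f ^ k := by
  rw [← geom_sum₂_mul, mul_comm b]
  refine mul_dvd_mul (Finset.dvd_sum fun i hi => ?_) hfg
  rw [← pow_mul_pow_sub a (Finset.mem_range.mp hi |> Nat.le_sub_one_of_lt)]
  exact mul_dvd_mul (pow_dvd_pow_of_dvd hg i) (pow_dvd_pow_of_dvd hf _)

namespace PowerSeries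

variable {R : Type*} [CommRing R] {f g : R⟦X⟧} {n : ℕ}

theorem coeff_eq_of_X_pow_dvd_sub (h : X ^ (n + 1) ∣ g - f) : coeff n g = coeff n f := by
  rw [← sub_eq_zero, ← map_sub]
  exact X_pow_dvd_iff.mp h n n.lt_succ_self

theorem X_pow_dvd_sub_trunc (f : R⟦X⟧) (n : ℕ) : X ^ n ∣ f - (trunc n f : R⟦X⟧) :=
  X_pow_dvd_iff.mpr fun m hm => by rw [map_sub, coeff_coe_trunc_of_lt hm, sub_self]

theorem X_pow_dvd_pow_sub_pow (hf : X ∣ f) (hg : X ∣ g) (hfg : X ^ n ∣ g - f) (k : ℕ) :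
    X ^ (n + (k - 1)) ∣ g ^ k - f ^ k :=
  pow_add (X : R⟦X⟧) n (k - 1) ▸ dvd_pow_sub_pow_of_dvd_sub hf hg hfg k

theorem coeff_pow_eq_of_X_pow_dvd_sub (hf : X ∣ f) (hg : X ∣ g) (hfg : X ^ n ∣ g - f)
    {k : ℕ} (hk : 2 ≤ k) : coeff n (g ^ k) = coeff n (f ^ k) :=
  coeff_eq_of_X_pow_dvd_sub <| (pow_dvd_pow X (by omega)).trans (X_pow_dvd_pow_sub_pow hf hg hfg k)

theorem coeff_pow_add_C_mul_X_pow (hf : X ∣ f) (hn : 2 ≤ n) (t : R) (k : ℕ) :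
    coeff (n + 1) ((f + C t * X ^ n) ^ k) =
      coeff (n + 1) (f ^ k) + if k = 2 then 2 * coeff 1 f * t else 0 := by
  match k with
  | 0 => simp
  | 1 => simp
  | 2 =>
    have hsq : (f + C t * X ^ n) ^ 2 =
        f ^ 2 + C (2 * t) * (f * X ^ n) + C (t ^ 2) * X ^ (2 * n) := by
      simp only [map_mul, map_pow, map_ofNat]
      ring
    rw [hsq, map_add, map_add, coeff_C_mul, coeff_mul_X_pow', coeff_C_mul_X_pow,
      if_pos (by omega), if_neg (by omega), Nat.add_sub_cancel_left]
    simp only [add_zero, if_true]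
    ring
  | k + 3 =>
    have hX : X ∣ f + C t * X ^ n :=
      dvd_add hf (dvd_mul_of_dvd_right (dvd_pow_self X (by omega)) _)
    have hdiff : X ^ n ∣ f + C t * X ^ n - f := by
      rw [add_sub_cancel_left]
      exact dvd_mul_left _ _
    rw [coeff_eq_of_X_pow_dvd_sub ((pow_dvd_pow X (by omega)).trans
      (X_pow_dvd_pow_sub_pow hf hX hdiff (k + 3)))]
    simp

theorem X_pow_dvd_derivative (h : X ^ n ∣ f) : X ^ (n - 1) ∣ d⁄dX R f :=
  X_pow_dvd_iff.mpr fun m hm => by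
    rw [coeff_derivative, X_pow_dvd_iff.mp h (m + 1) (by omega), zero_mul]

theorem derivative_C_mul_X_pow (t : R) (n : ℕ) :
    d⁄dX R (C t * X ^ (n + 1)) = C (t * (n + 1)) * X ^ n := by
  ext m
  rw [coeff_derivative, coeff_C_mul_X_pow, coeff_C_mul_X_pow]
  split_ifs <;> first | rfl | simp_all

theorem coeff_mul_derivative_eq_of_X_pow_dvd_sub {v : R⟦X⟧} (hv : X ^ 2 ∣ v)
    (hfg : X ^ n ∣ g - f) : coeff n (v * d⁄dX R g) = coeff n (v * d⁄dX R f) := by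
  have hvd : X ^ (2 + (n - 1)) ∣ v * d⁄dX R (g - f) :=
    pow_add (X : R⟦X⟧) 2 (n - 1) ▸ mul_dvd_mul hv (X_pow_dvd_derivative hfg)
  refine coeff_eq_of_X_pow_dvd_sub ?_
  rw [← mul_sub, ← map_sub]
  exact (pow_dvd_pow X (by omega)).trans hvd

theorem coeff_mul_derivative_add_C_mul_X_pow (v f : R⟦X⟧) (t : R) (n : ℕ) :
    coeff (n + 2) (v * d⁄dX R (f + C t * X ^ (n + 1))) =
      coeff (n + 2) (v * d⁄dX R f) + (n + 1) * coeff 2 v * t := by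
  rw [map_add, mul_add, map_add, derivative_C_mul_X_pow, mul_left_comm, coeff_C_mul,
    coeff_mul_X_pow', if_pos (by omega), show n + 2 - n = 2 by omega]
  ring

end PowerSeries

section

variable {β f g : ℝ⟦X⟧} {n : ℕ}

theorem psComp_X : psComp β X = β := by
  ext n
  simp [psComp, coeff_X_pow]

theorem coeff_psComp_eq_of_X_pow_dvd_sub (hβ : coeff 1 β = 0) (hf : X ∣ f) (hg : X ∣ g)
    (hfg : X ^ n ∣ g - f) : coeff n (psComp β g) = coeff n (psComp β f) := by
  simp only [psComp, coeff_mk]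
  refine Finset.sum_congr rfl fun k _ => ?_
  match k with
  | 0 => rfl
  | 1 => simp [hβ]
  | k + 2 => rw [coeff_pow_eq_of_X_pow_dvd_sub hf hg hfg (by omega)]

theorem coeff_psComp_add_C_mul_X_pow (hf : X ∣ f) (hn : 2 ≤ n) (t : ℝ) :
    coeff (n + 1) (psComp β (f + C t * X ^ n)) =
      coeff (n + 1) (psComp β f) + 2 * coeff 2 β * coeff 1 f * t := by
  simp only [psComp, coeff_mk, coeff_pow_add_C_mul_X_pow hf hn, mul_add, Finset.sum_add_distrib,
    mul_ite, mul_zero, Finset.sum_ite_eq', Finset.mem_range]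
  rw [if_pos (by omega)]
  ring

end

noncomputable def conjugacyDefect (β v h : ℝ⟦X⟧) : ℝ⟦X⟧ :=
  psComp β h - v * d⁄dX ℝ h

/-- The coefficient of `X²` is free: the equation at order 3 does not involve it. -/
noncomputable def conjugacyCoeff (β v : ℝ⟦X⟧) : ℕ → ℝ
  | 0 => 0
  | 1 => 1
  | 2 => 0
  | n + 3 =>
    coeff (n + 4) (conjugacyDefect β v
      (mk fun i => if _ : i < n + 3 then conjugacyCoeff β v i else 0)) / ((n + 1) * coeff 2 v)

noncomputable def conjugacySeries (β v : ℝ⟦X⟧) : ℝ⟦X⟧ :=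
  mk (conjugacyCoeff β v)

section

variable (β v : ℝ⟦X⟧)

theorem conjugacyCoeff_add_three (n : ℕ) :
    conjugacyCoeff β v (n + 3) =
      coeff (n + 4) (conjugacyDefect β v (trunc (n + 3) (conjugacySeries β v))) /
        ((n + 1) * coeff 2 v) := by
  rw [conjugacyCoeff]
  congr 4
  ext i
  simp [coeff_trunc, conjugacySeries]

theorem coeff_zero_conjugacySeries : coeff 0 (conjugacySeries β v) = 0 := by
  simp [conjugacySeries, conjugacyCoeff]

theorem coeff_one_conjugacySeries : coeff 1 (conjugacySeries β v) = 1 := by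
  simp [conjugacySeries, conjugacyCoeff]

theorem X_dvd_conjugacySeries : X ∣ conjugacySeries β v :=
  X_dvd_iff.mpr (by simpa using coeff_zero_conjugacySeries β v)

theorem X_pow_three_dvd_conjugacySeries_sub_X : X ^ 3 ∣ conjugacySeries β v - X := by
  refine X_pow_dvd_iff.mpr fun m hm => ?_
  interval_cases m <;> simp [conjugacySeries, conjugacyCoeff, coeff_X]

variable {β v} {f g : ℝ⟦X⟧} {n : ℕ}

theorem coeff_conjugacyDefect_eq_of_X_pow_dvd_sub (hβ : coeff 1 β = 0) (hv : X ^ 2 ∣ v)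
    (hf : X ∣ f) (hg : X ∣ g) (hfg : X ^ n ∣ g - f) :
    coeff n (conjugacyDefect β v g) = coeff n (conjugacyDefect β v f) := by
  simp only [conjugacyDefect, map_sub, coeff_psComp_eq_of_X_pow_dvd_sub hβ hf hg hfg,
    coeff_mul_derivative_eq_of_X_pow_dvd_sub hv hfg]

theorem coeff_conjugacyDefect_add_C_mul_X_pow (hf : X ∣ f) (t : ℝ) :
    coeff (n + 3) (conjugacyDefect β v (f + C t * X ^ (n + 2))) =
      coeff (n + 3) (conjugacyDefect β v f) +
        (2 * coeff 2 β * coeff 1 f - (n + 2) * coeff 2 v) * t := by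
  simp only [conjugacyDefect, map_sub, coeff_psComp_add_C_mul_X_pow hf (n := n + 2) (by omega),
    coeff_mul_derivative_add_C_mul_X_pow v f t (n + 1)]
  push_cast
  ring

theorem coeff_conjugacyDefect_conjugacySeries_of_le_three (hβ : coeff 1 β = 0)
    (hv : X ^ 2 ∣ v) (hn : n ≤ 3) (hβv : coeff n β = coeff n v) :
    coeff n (conjugacyDefect β v (conjugacySeries β v)) = 0 := by
  have hX : X ^ n ∣ conjugacySeries β v - X :=
    (pow_dvd_pow X hn).trans (X_pow_three_dvd_conjugacySeries_sub_X β v)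
  rw [coeff_conjugacyDefect_eq_of_X_pow_dvd_sub hβ hv dvd_rfl (X_dvd_conjugacySeries β v) hX,
    conjugacyDefect, psComp_X, derivative_X, mul_one, map_sub, hβv, sub_self]

theorem coeff_conjugacyDefect_conjugacySeries_add_four (hβ₁ : coeff 1 β = 0)
    (hβ₂ : coeff 2 β = coeff 2 v) (hv : X ^ 2 ∣ v) (hv₂ : coeff 2 v ≠ 0) (n : ℕ) :
    coeff (n + 4) (conjugacyDefect β v (conjugacySeries β v)) = 0 := by
  set h := conjugacySeries β v with hh_def
  set p : ℝ⟦X⟧ := (trunc (n + 3) h : ℝ⟦X⟧) with hp_def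
  have hp : X ∣ p := X_dvd_iff.mpr (by
    rw [← coeff_zero_eq_constantCoeff_apply, coeff_coe_trunc_of_lt (by omega)]
    exact coeff_zero_conjugacySeries β v)
  have hp₁ : coeff 1 p = 1 := by
    rw [coeff_coe_trunc_of_lt (by omega), coeff_one_conjugacySeries]
  have hhp : X ^ (n + 4) ∣ h - (p + C (coeff (n + 3) h) * X ^ (n + 3)) := by
    simpa [p, trunc_succ, ← monomial_eq_C_mul_X_pow, sub_add_eq_sub_sub] using
      X_pow_dvd_sub_trunc h (n + 4)
  have hpX : X ∣ p + C (coeff (n + 3) h) * X ^ (n + 3) :=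
    dvd_add hp (dvd_mul_of_dvd_right (dvd_pow_self X (by omega)) _)
  rw [coeff_conjugacyDefect_eq_of_X_pow_dvd_sub hβ₁ hv hpX (X_dvd_conjugacySeries β v) hhp,
    coeff_conjugacyDefect_add_C_mul_X_pow hp, hp₁, hβ₂, hh_def, conjugacySeries, coeff_mk,
    conjugacyCoeff_add_three, ← hp_def]
  field_simp
  push_cast
  ring

theorem conjugacyDefect_conjugacySeries (hv : X ^ 2 ∣ v) (hv₂ : coeff 2 v ≠ 0)
    (hβv : X ^ 4 ∣ β - v) : conjugacyDefect β v (conjugacySeries β v) = 0 := by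
  have hβ : ∀ m < 4, coeff m β = coeff m v := fun m hm =>
    sub_eq_zero.mp (by simpa using X_pow_dvd_iff.mp hβv m hm)
  have hβ₁ : coeff 1 β = 0 := (hβ 1 (by norm_num)).trans (X_pow_dvd_iff.mp hv 1 (by norm_num))
  ext N
  rw [map_zero]
  rcases lt_or_ge N 4 with hN | hN
  · exact coeff_conjugacyDefect_conjugacySeries_of_le_three hβ₁ hv (by omega) (hβ N hN)
  · obtain ⟨n, rfl⟩ : ∃ n, N = n + 4 := ⟨N - 4, by omega⟩
    exact coeff_conjugacyDefect_conjugacySeries_add_four hβ₁ (hβ 2 (by norm_num)) hv hv₂ n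

end

/-- Cubic normal form of the β-function: if `β(g) = b₂ g² + b₃ g³ + O(g⁴)` with
`b₂ ≠ 0`, there is a formal reparametrization `h(ḡ) = ḡ + O(ḡ²)` such that the
transformed β-function `β̄ = (β ∘ h)/h'` is exactly `b₂ ḡ² + b₃ ḡ³`. -/
theorem beta_cubic_normal_form
    (β : PowerSeries ℝ) (b₂ b₃ : ℝ)
    (hβ0 : PowerSeries.coeff 0 β = 0) (hβ1 : PowerSeries.coeff 1 β = 0)
    (hβ2 : PowerSeries.coeff 2 β = b₂) (hβ3 : PowerSeries.coeff 3 β = b₃)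
    (hb₂ : b₂ ≠ 0) :
    ∃ h : PowerSeries ℝ,
      PowerSeries.coeff 0 h = 0 ∧ PowerSeries.coeff 1 h = 1 ∧
      psComp β h =
        (PowerSeries.C b₂ * PowerSeries.X ^ 2 + PowerSeries.C b₃ * PowerSeries.X ^ 3) *
          PowerSeries.derivativeFun h := by
  set v : ℝ⟦X⟧ := C b₂ * X ^ 2 + C b₃ * X ^ 3
  have hv : X ^ 2 ∣ v := ⟨C b₂ + C b₃ * X, by ring⟩
  have hv₂ : coeff 2 v = b₂ := by simp [v, coeff_X_pow]
  have hβv : X ^ 4 ∣ β - v := X_pow_dvd_iff.mpr fun m hm => by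
    rw [coeff_zero_eq_constantCoeff_apply] at hβ0
    interval_cases m <;> simp [v, coeff_X_pow, hβ0, hβ1, hβ2, hβ3]
  exact ⟨conjugacySeries β v, coeff_zero_conjugacySeries β v, coeff_one_conjugacySeries β v,
    sub_eq_zero.mp (conjugacyDefect_conjugacySeries hv (hv₂ ▸ hb₂) hβv)⟩
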